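/- Let G = (V, ω) be a finite connected weighted graph with vertex measure μ, let h, f : V → ℝ with f_i > 0 for all i, and let α ≥ p > 1. If φ̂ : V → ℝ with φ̂ ≥ 0 and φ̂ ≢ 0 minimizes the energy functional, i.e. I(φ̂) ≤ I(φ) for all φ ≥ 0 with φ ≢ 0, then φ̂_i > 0 for every i ∈ V. -/

import Mathlib

/-!
If `φ̂` vanished somewhere, connectedness would give an edge `j ~ k` with `φ̂ j = 0 < φ̂ k`.
Raising the value at `j` from `0` to `t > 0` changes the gradient term by
`-p t ∑_l ω_jl φ̂_l^{p-1} + o(t)`, where the edge to `k` makes the sum positive, while the `h`- and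
`f`-terms only change by `O(t^p)` and `O(t^α)` with `p, α > 1`. So the energy has negative right
derivative at `t = 0`, contradicting minimality.
-/

open Function

/-- The gradient energy `∫_E |∇φ|^p dω = (1/2) ∑_{i,j} ω_ij |φ_j − φ_i|^p`. -/
noncomputable def gradEnergy {V : Type*} [Fintype V] (ω : V → V → ℝ) (p : ℝ)
    (φ : V → ℝ) : ℝ :=
  (1 / 2) * ∑ i, ∑ j, ω i j * |φ j - φ i| ^ p

/-- The energy functional
`I(φ) = (∫_E |∇φ|^p dω − ∫_V h φ^p dμ) (∫_V f φ^α dμ)^{−p/α}`. -/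
noncomputable def energy {V : Type*} [Fintype V] (μ : V → ℝ) (ω : V → V → ℝ)
    (h f : V → ℝ) (p α : ℝ) (φ : V → ℝ) : ℝ :=
  (gradEnergy ω p φ - ∑ i, μ i * (h i * φ i ^ p)) *
    (∑ i, μ i * (f i * φ i ^ α)) ^ (-(p / α))

theorem Relation.ReflTransGen.exists_rel_not_and {α : Type*} {r : α → α → Prop}
    {P : α → Prop} {a b : α} (hab : ReflTransGen r a b) (ha : ¬P a) (hb : P b) :
    ∃ x y, r x y ∧ ¬P x ∧ P y := by
  induction hab with
  | refl => exact absurd hb ha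
  | @tail c d _ hcd ih =>
    by_cases hc : P c
    · exact ih hc
    · exact ⟨c, d, hcd, hc, hb⟩

theorem exists_rel_eq_zero_pos {V : Type*} {r : V → V → Prop}
    (hconn : ∀ i j, Relation.ReflTransGen r i j) {φ : V → ℝ} (hφ : ∀ i, 0 ≤ φ i)
    (hne : φ ≠ 0) (hzero : ∃ i, φ i ≤ 0) : ∃ j k, r j k ∧ φ j = 0 ∧ 0 < φ k := by
  obtain ⟨i₀, hi₀⟩ := hzero
  obtain ⟨k, hk⟩ : ∃ k, 0 < φ k := by
    by_contra! hle
    exact hne (funext fun i => le_antisymm (hle i) (hφ i))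
  obtain ⟨j, k, hjk, hj, hk⟩ :=
    (hconn i₀ k).exists_rel_not_and (P := (0 < φ ·)) hi₀.not_gt hk
  exact ⟨j, k, hjk, le_antisymm (not_lt.1 hj) (hφ j), hk⟩

theorem HasDerivAt.nonneg_of_le_right {F : ℝ → ℝ} {F' x : ℝ} (hF : HasDerivAt F F' x)
    (hmin : ∀ t > 0, F x ≤ F (x + t)) : 0 ≤ F' := by
  refine ge_of_tendsto hF.tendsto_slope_zero_right ?_
  filter_upwards [self_mem_nhdsWithin] with t (ht : 0 < t)
  exact smul_nonneg (inv_nonneg.2 ht.le) (sub_nonneg.2 (hmin t ht))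

theorem Fintype.sum_sum_eq_of_eq_zero {ι M : Type*} [Fintype ι] [DecidableEq ι]
    [AddCommGroup M] (d : ι → ι → M) (j : ι) (hd : ∀ i l, i ≠ j → l ≠ j → d i l = 0) :
    ∑ i, ∑ l, d i l = ∑ l, d j l + ∑ i, d i j - d j j := by
  rw [Fintype.sum_eq_add_sum_compl j, Fintype.sum_eq_add_sum_compl j fun i => d i j]
  have hrow : ∀ i ∈ ({j}ᶜ : Finset ι), ∑ l, d i l = d i j := fun i hi =>
    Fintype.sum_eq_single j fun l hl => hd i l (by simpa using hi) hl
  rw [Finset.sum_congr rfl hrow]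
  abel

theorem Fintype.sum_apply_update_of_eq_zero {ι : Type*} [Fintype ι] [DecidableEq ι]
    (F : ι → ℝ → ℝ) (φ : ι → ℝ) {j : ι} (hj : F j (φ j) = 0) (t : ℝ) :
    ∑ i, F i (update φ j t i) = ∑ i, F i (φ i) + F j t := by
  rw [Fintype.sum_eq_add_sum_compl j, Fintype.sum_eq_add_sum_compl j fun i => F i (φ i), hj,
    update_self, Finset.sum_congr rfl fun i hi => by rw [update_of_ne (by simpa using hi)]]
  ring

theorem hasDerivAt_abs_sub_rpow_zero (x : ℝ) {p : ℝ} (hp : 1 < p) :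
    HasDerivAt (fun t => |x - t| ^ p) (-(p * |x| ^ (p - 2) * x)) 0 := by
  have := (hasDerivAt_abs_rpow (x - 0) hp).comp 0 ((hasDerivAt_id 0).const_sub x)
  simpa [Function.comp_def] using this

theorem hasDerivAt_abs_rpow_zero {p : ℝ} (hp : 1 < p) :
    HasDerivAt (fun t : ℝ => |t| ^ p) 0 0 := by
  simpa using hasDerivAt_abs_rpow 0 hp

section Energy

variable {V : Type*} [Fintype V] [DecidableEq V]

theorem gradEnergy_update {ω : V → V → ℝ} (hωsym : ∀ i j, ω i j = ω j i)
    (hωloop : ∀ i, ω i i = 0) (p : ℝ) (φ : V → ℝ) (j : V) (t : ℝ) :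
    gradEnergy ω p (update φ j t) =
      gradEnergy ω p φ + ∑ l, ω j l * (|φ l - t| ^ p - |φ l - φ j| ^ p) := by
  set d : V → V → ℝ := fun i l =>
    ω i l * |update φ j t l - update φ j t i| ^ p - ω i l * |φ l - φ i| ^ p
  have hrow : ∀ l, d j l = ω j l * (|φ l - t| ^ p - |φ l - φ j| ^ p) := by
    intro l
    rcases eq_or_ne l j with rfl | hl
    · simp [d, hωloop]
    · simp only [d, update_of_ne hl, update_self]
      ring
  have hcol : ∀ i, d i j = d j i := fun i => by simp only [d, hωsym i j, abs_sub_comm]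
  have hd : ∑ i, ∑ l, d i l = 2 * ∑ l, ω j l * (|φ l - t| ^ p - |φ l - φ j| ^ p) := by
    rw [Fintype.sum_sum_eq_of_eq_zero d j fun i l hi hl => by
        simp [d, update_of_ne hi, update_of_ne hl],
      Finset.sum_congr rfl fun i _ => hcol i, Finset.sum_congr rfl fun l _ => hrow l]
    simp [d, hωloop]
    ring
  simp only [gradEnergy]
  rw [← sub_eq_iff_eq_add', ← mul_sub, ← Finset.sum_sub_distrib]
  simp_rw [← Finset.sum_sub_distrib]
  rw [hd]
  ring

-- Written with `|t|`, the right-hand side is differentiable at `t = 0`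
-- (`hasDerivAt_energy_profile`).
theorem energy_update_of_eq_zero {μ : V → ℝ} {ω : V → V → ℝ} (hωsym : ∀ i j, ω i j = ω j i)
    (hωloop : ∀ i, ω i i = 0) (h f : V → ℝ) {p α : ℝ} (hp : p ≠ 0) (hα : α ≠ 0)
    {φ : V → ℝ} {j : V} (hj : φ j = 0) {t : ℝ} (ht : 0 ≤ t) :
    energy μ ω h f p α (update φ j t) =
      (gradEnergy ω p φ - ∑ i, μ i * (h i * φ i ^ p)
          + ∑ l, ω j l * (|φ l - t| ^ p - |φ l| ^ p) - μ j * h j * |t| ^ p) *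
        (∑ i, μ i * (f i * φ i ^ α) + μ j * f j * |t| ^ α) ^ (-(p / α)) := by
  rw [energy, gradEnergy_update hωsym hωloop,
    Fintype.sum_apply_update_of_eq_zero (fun i x => μ i * (h i * x ^ p)) φ
      (by simp [hj, Real.zero_rpow hp]),
    Fintype.sum_apply_update_of_eq_zero (fun i x => μ i * (f i * x ^ α)) φ
      (by simp [hj, Real.zero_rpow hα]), hj, abs_of_nonneg ht]
  simp only [sub_zero, mul_assoc]
  ring

end Energy

theorem hasDerivAt_energy_profile {ι : Type*} [Fintype ι] (w x : ι → ℝ) (a b c d q : ℝ)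
    {p α : ℝ} (hp : 1 < p) (hα : 1 < α) (hb : 0 < b) :
    HasDerivAt
      (fun t => (a + ∑ l, w l * (|x l - t| ^ p - |x l| ^ p) - c * |t| ^ p) *
        (b + d * |t| ^ α) ^ (-q))
      (-(p * ∑ l, w l * (|x l| ^ (p - 2) * x l)) * b ^ (-q)) 0 := by
  have hsum := HasDerivAt.fun_sum (u := Finset.univ) fun l _ =>
    ((hasDerivAt_abs_sub_rpow_zero (x l) hp).sub_const (|x l| ^ p)).const_mul (w l)
  have hN := (hsum.const_add a).fun_sub ((hasDerivAt_abs_rpow_zero hp).const_mul c)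
  have hD := (((hasDerivAt_abs_rpow_zero hα).const_mul d).const_add b).rpow_const
    (p := -q) (Or.inl (by simp [hb.ne', (by linarith : (0:ℝ) < α).ne']))
  refine (hN.fun_mul hD).congr_deriv ?_
  simp only [abs_zero, sub_zero, mul_zero, zero_mul, add_zero,
    Real.zero_rpow (by linarith : α ≠ 0)]
  simp only [mul_neg, Finset.sum_neg_distrib, Finset.mul_sum]
  congr 3 with l
  ring

theorem minimizer_positive_general
    {V : Type*} [Fintype V]
    (μ : V → ℝ) (hμ : ∀ i, 0 < μ i)
    (ω : V → V → ℝ) (hωsym : ∀ i j, ω i j = ω j i)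
    (hωnonneg : ∀ i j, 0 ≤ ω i j) (hωloop : ∀ i, ω i i = 0)
    (hconn : ∀ i j : V, Relation.ReflTransGen (fun a b => 0 < ω a b) i j)
    (h f : V → ℝ) (hf : ∀ i, 0 < f i)
    (p α : ℝ) (hp : 1 < p) (hpα : p ≤ α)
    (φhat : V → ℝ) (hnonneg : ∀ i, 0 ≤ φhat i) (hne : φhat ≠ 0)
    (hmin : ∀ φ : V → ℝ, (∀ i, 0 ≤ φ i) → φ ≠ 0 →
      energy μ ω h f p α φhat ≤ energy μ ω h f p α φ) :
    ∀ i, 0 < φhat i := by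
  classical
  by_contra! hzero
  obtain ⟨j, k, hjk, hj0, hk⟩ := exists_rel_eq_zero_pos hconn hnonneg hne hzero
  have hp0 : 0 < p := one_pos.trans hp
  have hα : 1 < α := hp.trans_le hpα
  have hD : 0 < ∑ i, μ i * (f i * φhat i ^ α) :=
    Finset.sum_pos'
      (fun i _ => mul_nonneg (hμ i).le (mul_nonneg (hf i).le (Real.rpow_nonneg (hnonneg i) α)))
      ⟨k, Finset.mem_univ k, mul_pos (hμ k) (mul_pos (hf k) (Real.rpow_pos_of_pos hk α))⟩
  have hslope : 0 < ∑ l, ω j l * (|φhat l| ^ (p - 2) * φhat l) :=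
    Finset.sum_pos'
      (fun l _ => mul_nonneg (hωnonneg j l) (mul_nonneg (by positivity) (hnonneg l)))
      ⟨k, Finset.mem_univ k, by positivity⟩
  have hF := hasDerivAt_energy_profile (ω j) φhat
    (gradEnergy ω p φhat - ∑ i, μ i * (h i * φhat i ^ p)) _ (μ j * h j) (μ j * f j) (p / α)
    hp hα hD
  refine (hF.nonneg_of_le_right fun t ht => ?_).not_gt
    (mul_neg_of_neg_of_pos (by simp only [Left.neg_neg_iff]; positivity) (by positivity))
  have hupdate := fun t (ht : 0 ≤ t) => energy_update_of_eq_zero (μ := μ) hωsym hωloop h f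
    hp0.ne' (by linarith : α ≠ 0) hj0 ht
  rw [zero_add, ← hupdate 0 le_rfl, ← hupdate t ht.le, ← hj0, update_eq_self]
  refine hmin _ (fun i => ?_) fun h0 => ?_
  · rcases eq_or_ne i j with rfl | hi
    · simpa using ht.le
    · simpa [update_of_ne hi] using hnonneg i
  · simpa [ht.ne'] using congrFun h0 j

/-- On a finite connected graph, a nonnegative nonzero minimizer of the energy
functional is everywhere strictly positive. -/
theorem minimizer_positive
    {V : Type*} [Fintype V] [Nonempty V]
    (μ : V → ℝ) (hμ : ∀ i, 0 < μ i)
    (ω : V → V → ℝ) (hωsym : ∀ i j, ω i j = ω j i)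
    (hωnonneg : ∀ i j, 0 ≤ ω i j) (hωloop : ∀ i, ω i i = 0)
    (hconn : ∀ i j : V, Relation.ReflTransGen (fun a b => 0 < ω a b) i j)
    (h f : V → ℝ) (hf : ∀ i, 0 < f i)
    (p α : ℝ) (hp : 1 < p) (hpα : p ≤ α)
    (φhat : V → ℝ) (hnonneg : ∀ i, 0 ≤ φhat i) (hne : φhat ≠ 0)
    (hmin : ∀ φ : V → ℝ, (∀ i, 0 ≤ φ i) → φ ≠ 0 →
      energy μ ω h f p α φhat ≤ energy μ ω h f p α φ) :
    ∀ i, 0 < φhat i :=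
  minimizer_positive_general μ hμ ω hωsym hωnonneg hωloop hconn h f hf p α hp hpα φhat hnonneg hne
    hmin
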